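/- Let K be a normal subgroup of finite index in a group H, let V be a nonzero finite-dimensional complex vector space, and let ρ : K → GL(V) be an irreducible representation. Consider the subspace W = { f : H → V | f(h y) = ρ(y)⁻¹ (f(h)) for all h ∈ H, y ∈ K } of the space of functions from H to V. Then W is invariant under the H-action on functions given by (h · f)(x) = f(h⁻¹ x), this action defines a representation ind(ρ) of H on W, and this representation of H is semisimple. -/

import Mathlib

/-- A representation `ρ : K → GL(V)` is irreducible if `V ≠ 0` and the only
subspaces of `V` invariant under all `ρ(k)` are `0` and `V`. -/
def IsIrreducibleRep {K : Type*} [Group K] {V : Type*} [AddCommGroup V] [Module ℂ V]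
    (ρ : K →* (V →ₗ[ℂ] V)ˣ) : Prop :=
  Nontrivial V ∧
    ∀ W : Submodule ℂ V, (∀ k : K, ∀ v ∈ W, (ρ k : V →ₗ[ℂ] V) v ∈ W) → W = ⊥ ∨ W = ⊤

/-- A representation `ρ : H → GL(U)` is semisimple if `U` is a direct sum of
irreducible invariant subspaces; equivalently, every invariant subspace admits an
invariant complement. -/
def IsSemisimpleRep {H : Type*} [Group H] {U : Type*} [AddCommGroup U] [Module ℂ U]
    (ρ : H →* (U →ₗ[ℂ] U)ˣ) : Prop :=
  ∀ W : Submodule ℂ U, (∀ h : H, ∀ v ∈ W, (ρ h : U →ₗ[ℂ] U) v ∈ W) →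
    ∃ W' : Submodule ℂ U, (∀ h : H, ∀ v ∈ W', (ρ h : U →ₗ[ℂ] U) v ∈ W') ∧ IsCompl W W'

/-- The space `W = { f : H → V | f(h y) = ρ(y)⁻¹ (f(h)) for all h ∈ H, y ∈ K }`
underlying the representation of `H` induced from `ρ : K → GL(V)`. -/
def IndW {H : Type*} [Group H] {K : Subgroup H} {V : Type*} [AddCommGroup V] [Module ℂ V]
    (ρ : ↥K →* (V →ₗ[ℂ] V)ˣ) : Submodule ℂ (H → V) where
  carrier := {f | ∀ (h : H) (y : ↥K), f (h * y) = (↑(ρ y)⁻¹ : V →ₗ[ℂ] V) (f h)}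
  add_mem' := by
    intro f g hf hg h y
    simp [hf h y, hg h y]
  zero_mem' := by
    intro h y
    simp
  smul_mem' := by
    intro c f hf h y
    simp [hf h y]

open Representation

/-! ### Bridge between invariant subspaces and monoid-algebra submodules -/

section Bridge
variable {G : Type*} [Group G] {M : Type*} [AddCommGroup M] [Module ℂ M]

/-- The `Representation` underlying a homomorphism into units of endomorphisms. -/
def repOf (τ : G →* (M →ₗ[ℂ] M)ˣ) : Representation ℂ G M :=
  (Units.coeHom _).comp τ

lemma repOf_apply (τ : G →* (M →ₗ[ℂ] M)ˣ) (g : G) : repOf τ g = (τ g : M →ₗ[ℂ] M) := rfl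

lemma asModule_smul (τ : Representation ℂ G M) (r : MonoidAlgebra ℂ G) (x : τ.asModule) :
    (r • x : τ.asModule) = r.coeff.sum fun g a => a • τ g x := by
  show τ.asAlgebraHom r x = _
  rw [asAlgebraHom_def, MonoidAlgebra.lift_apply]
  simp [Finsupp.sum, LinearMap.sum_apply]
  exact Finset.sum_apply _ _ _

lemma asModule_single_smul (τ : Representation ℂ G M) (g : G) (c : ℂ) (x : τ.asModule) :
    ((MonoidAlgebra.single g c : MonoidAlgebra ℂ G) • x : τ.asModule) = c • τ g x := by
  rw [asModule_smul, MonoidAlgebra.coeff_single, Finsupp.sum_single_index]; simp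

/-- Invariant `ℂ`-submodule from a `ℂ[G]`-submodule. -/
def toInvt (τ : G →* (M →ₗ[ℂ] M)ˣ) (p : Submodule (MonoidAlgebra ℂ G) (repOf τ).asModule) :
    Submodule ℂ M where
  carrier := p.carrier
  add_mem' := p.add_mem
  zero_mem' := p.zero_mem
  smul_mem' := by
    intro c x hx
    have := p.smul_mem (MonoidAlgebra.single (1 : G) c) hx
    rwa [asModule_single_smul (repOf τ) 1 c x, repOf_apply, map_one, Units.val_one, Module.End.one_apply] at this

lemma toInvt_invariant (τ : G →* (M →ₗ[ℂ] M)ˣ) (p : Submodule (MonoidAlgebra ℂ G) (repOf τ).asModule)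
    (g : G) (x : M) (hx : x ∈ toInvt τ p) : (τ g : M →ₗ[ℂ] M) x ∈ toInvt τ p := by
  have := p.smul_mem (MonoidAlgebra.single g (1 : ℂ)) hx
  rwa [asModule_single_smul (repOf τ) g 1 x, one_smul] at this

/-- `ℂ[G]`-submodule from an invariant `ℂ`-submodule. -/
def toCG (τ : G →* (M →ₗ[ℂ] M)ˣ) (U : Submodule ℂ M)
    (hU : ∀ g : G, ∀ v ∈ U, (τ g : M →ₗ[ℂ] M) v ∈ U) :
    Submodule (MonoidAlgebra ℂ G) (repOf τ).asModule where
  carrier := U.carrier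
  add_mem' := U.add_mem
  zero_mem' := U.zero_mem
  smul_mem' := by
    intro r x hx
    rw [asModule_smul, Finsupp.sum]
    exact Submodule.sum_mem U fun g _ => U.smul_mem _ (hU g _ hx)

lemma simple_of_irr (τ : G →* (M →ₗ[ℂ] M)ˣ) (h : IsIrreducibleRep τ) :
    IsSimpleModule (MonoidAlgebra ℂ G) (repOf τ).asModule := by
  haveI : Nontrivial ((repOf τ).asModule) := h.1
  refine @IsSimpleModule.mk _ _ _ _ _ ?_
  constructor
  intro p
  rcases h.2 (toInvt τ p) (toInvt_invariant τ p) with hb | ht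
  · left; ext x
    exact (SetLike.ext_iff.mp hb x).trans (Submodule.mem_bot ℂ (x := (x : M)))
  · right; ext x
    exact (SetLike.ext_iff.mp ht x).trans (iff_of_true trivial trivial)

lemma semisimpleRep_of (τ : G →* (M →ₗ[ℂ] M)ˣ)
    (hss : IsSemisimpleModule (MonoidAlgebra ℂ G) (repOf τ).asModule) :
    IsSemisimpleRep τ := by
  intro U hU
  obtain ⟨q, hq⟩ := exists_isCompl (toCG τ U hU)
  refine ⟨toInvt τ q, toInvt_invariant τ q, ?_, ?_⟩
  · rw [Submodule.disjoint_def]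
    intro x hxU hxq
    exact Submodule.disjoint_def.mp hq.disjoint x hxU hxq
  · rw [codisjoint_iff, eq_top_iff]
    intro x _
    have hmem : ∀ z : (repOf τ).asModule, z ∈ toCG τ U hU ⊔ q := fun z =>
      hq.codisjoint.eq_top ▸ Submodule.mem_top
    obtain ⟨y, hy, z, hz, rfl⟩ := Submodule.mem_sup.mp (hmem x)
    exact Submodule.add_mem_sup hy hz

end Bridge

/-! ### Finite products of semisimple modules -/

theorem piSemisimple {R ι : Type*} [Ring R] [Finite ι] [DecidableEq ι] {M : ι → Type*}
    [∀ i, AddCommGroup (M i)] [∀ i, Module R (M i)] [∀ i, IsSemisimpleModule R (M i)] :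
    IsSemisimpleModule R (∀ i, M i) :=
  isSemisimpleModule_of_isSemisimpleModule_submodule'
    (p := fun i => LinearMap.range (LinearMap.single R M i))
    (fun _ => IsSemisimpleModule.range _) (LinearMap.iSup_range_single R M)

/-! ### Conjugate representations -/

/-- Conjugation of `K` by `g` for `K` normal. -/
def conjHom {H : Type*} [Group H] (K : Subgroup H) [K.Normal] (g : H) : ↥K →* ↥K where
  toFun y := ⟨g⁻¹ * y * g, by simpa using Subgroup.Normal.conj_mem ‹K.Normal› y.1 y.2 g⁻¹⟩
  map_one' := by ext; simp
  map_mul' y z := by ext; simp [mul_assoc]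

lemma conjHom_surj {H : Type*} [Group H] (K : Subgroup H) [K.Normal] (g : H) (y : ↥K) :
    conjHom K g ⟨g * y * g⁻¹, by simpa using Subgroup.Normal.conj_mem ‹K.Normal› y.1 y.2 g⟩ = y := by
  ext; simp [conjHom, mul_assoc]

lemma irr_conj {H : Type*} [Group H] (K : Subgroup H) [K.Normal]
    {V : Type*} [AddCommGroup V] [Module ℂ V] (ρ : ↥K →* (V →ₗ[ℂ] V)ˣ)
    (h : IsIrreducibleRep ρ) (g : H) : IsIrreducibleRep (ρ.comp (conjHom K g)) := by
  refine ⟨h.1, fun U hU => h.2 U fun y v hv => ?_⟩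
  have := hU ⟨g * y * g⁻¹, by simpa using Subgroup.Normal.conj_mem ‹K.Normal› y.1 y.2 g⟩ v hv
  rwa [MonoidHom.comp_apply, conjHom_surj] at this

/-! ### Diagonal product representations -/

section Pi
variable {G : Type*} [Group G] {Q : Type*} {V : Type*} [AddCommGroup V] [Module ℂ V]

def piRepL (σ : Q → (G →* (V →ₗ[ℂ] V)ˣ)) (g : G) : (Q → V) →ₗ[ℂ] (Q → V) :=
  LinearMap.pi fun c => ((σ c g : V →ₗ[ℂ] V)).comp (LinearMap.proj c)

lemma piRepL_apply (σ : Q → (G →* (V →ₗ[ℂ] V)ˣ)) (g : G) (v : Q → V) (c : Q) :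
    piRepL σ g v c = (σ c g : V →ₗ[ℂ] V) (v c) := rfl

lemma piRepL_mul (σ : Q → (G →* (V →ₗ[ℂ] V)ˣ)) (g h : G) :
    piRepL σ (g * h) = (piRepL σ g).comp (piRepL σ h) := by
  refine LinearMap.ext fun v => funext fun c => ?_
  simp [piRepL_apply, map_mul]

def piRep (σ : Q → (G →* (V →ₗ[ℂ] V)ˣ)) : G →* ((Q → V) →ₗ[ℂ] (Q → V))ˣ where
  toFun g := ⟨piRepL σ g, piRepL σ g⁻¹,
    by rw [Module.End.mul_eq_comp, ← piRepL_mul, mul_inv_cancel];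
       exact LinearMap.ext fun v => funext fun c => by simp [piRepL_apply],
    by rw [Module.End.mul_eq_comp, ← piRepL_mul, inv_mul_cancel];
       exact LinearMap.ext fun v => funext fun c => by simp [piRepL_apply]⟩
  map_one' := by
    refine Units.ext (LinearMap.ext fun v => funext fun c => ?_)
    simp [piRepL_apply]
  map_mul' g h := by
    refine Units.ext ?_
    simp only [Units.val_mul]
    exact piRepL_mul σ g h

lemma pi_asModule_smul (σ : Q → (G →* (V →ₗ[ℂ] V)ˣ)) (r : MonoidAlgebra ℂ G)
    (w : ∀ c, (repOf (σ c)).asModule) (c : Q) :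
    (r • w) c = r.coeff.sum fun g a => a • (σ c g : V →ₗ[ℂ] V) (w c) := by
  have h0 : (r • w) c = (r • (w c) : (repOf (σ c)).asModule) := rfl
  rw [h0, asModule_smul]
  rfl

lemma piRep_semisimple [Finite Q] (σ : Q → (G →* (V →ₗ[ℂ] V)ˣ))
    (hσ : ∀ c, IsIrreducibleRep (σ c)) :
    IsSemisimpleModule (MonoidAlgebra ℂ G) (repOf (piRep σ)).asModule := by
  haveI : ∀ c, IsSimpleModule (MonoidAlgebra ℂ G) (repOf (σ c)).asModule :=
    fun c => simple_of_irr (σ c) (hσ c)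
  haveI := Classical.decEq Q
  haveI : IsSemisimpleModule (MonoidAlgebra ℂ G) (∀ c, (repOf (σ c)).asModule) := piSemisimple
  refine IsSemisimpleModule.congr
    (?_ : (repOf (piRep σ)).asModule ≃ₗ[MonoidAlgebra ℂ G] ∀ c, (repOf (σ c)).asModule)
  refine
    { toFun := fun v => v
      invFun := fun v => v
      left_inv := fun v => rfl
      right_inv := fun v => rfl
      map_add' := fun v w => rfl
      map_smul' := fun r v => ?_ }
  funext c
  have h := congrFun (asModule_smul (repOf (piRep σ)) r v) c
  have h' : (Finsupp.sum r.coeff fun g a => a • (repOf (piRep σ)) g v) c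
      = r.coeff.sum fun g a => a • (σ c g : V →ₗ[ℂ] V) (v c) := by
    rw [Finsupp.sum, Finsupp.sum, Finset.sum_apply]
    rfl
  exact (h.trans h').trans (pi_asModule_smul σ r v c).symm

end Pi

/-! ### Transfer of semisimplicity along an equivariant linear equivalence -/

section T
variable {G : Type*} [Group G] {M₁ M₂ : Type*} [AddCommGroup M₁] [Module ℂ M₁]
  [AddCommGroup M₂] [Module ℂ M₂]

lemma transfer_semisimple (τ₁ : G →* (M₁ →ₗ[ℂ] M₁)ˣ) (τ₂ : G →* (M₂ →ₗ[ℂ] M₂)ˣ)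
    (E : M₁ ≃ₗ[ℂ] M₂) (hE : ∀ g x, E ((τ₁ g : M₁ →ₗ[ℂ] M₁) x) = (τ₂ g : M₂ →ₗ[ℂ] M₂) (E x))
    (h2 : IsSemisimpleRep τ₂) : IsSemisimpleRep τ₁ := by
  have hE' : ∀ g y, E.symm ((τ₂ g : M₂ →ₗ[ℂ] M₂) y) = (τ₁ g : M₁ →ₗ[ℂ] M₁) (E.symm y) := by
    intro g y
    apply E.injective
    rw [E.apply_symm_apply, hE, E.apply_symm_apply]
  intro U hU
  obtain ⟨W', hW', hc⟩ := h2 (U.map (E : M₁ →ₗ[ℂ] M₂)) (by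
    rintro g _ ⟨x, hx, rfl⟩
    exact ⟨(τ₁ g : M₁ →ₗ[ℂ] M₁) x, hU g x hx, by simp only [LinearEquiv.coe_coe]; exact hE g x⟩)
  refine ⟨W'.map (E.symm : M₂ →ₗ[ℂ] M₁), ?_, ?_⟩
  · rintro g _ ⟨x, hx, rfl⟩
    exact ⟨(τ₂ g : M₂ →ₗ[ℂ] M₂) x, hW' g x hx, by simp only [LinearEquiv.coe_coe]; exact hE' g x⟩
  · have hmap : Submodule.map (E.symm : M₂ →ₗ[ℂ] M₁) (U.map (E : M₁ →ₗ[ℂ] M₂)) = U := by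
      ext x
      constructor
      · rintro ⟨_, ⟨y, hy, rfl⟩, rfl⟩
        simpa using hy
      · intro hx
        exact ⟨E x, ⟨x, hx, rfl⟩, E.symm_apply_apply x⟩
    have := (Submodule.orderIsoMapComap E.symm).isCompl hc
    rwa [show (Submodule.orderIsoMapComap E.symm) (U.map (E : M₁ →ₗ[ℂ] M₂)) =
        Submodule.map (E.symm : M₂ →ₗ[ℂ] M₁) (U.map (E : M₁ →ₗ[ℂ] M₂)) from rfl, hmap] at this

end T

/-! ### The induced representation -/

section Ind
variable {H : Type*} [Group H] {K : Subgroup H} {V : Type*} [AddCommGroup V] [Module ℂ V]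
  (ρ : ↥K →* (V →ₗ[ℂ] V)ˣ)

lemma indW_shift_mem (h : H) (f : H → V) (hf : f ∈ IndW ρ) :
    (fun x => f (h⁻¹ * x)) ∈ IndW ρ := by
  intro x y
  show f (h⁻¹ * (x * y)) = _
  rw [← mul_assoc]
  exact hf (h⁻¹ * x) y

def indL (h : H) : ↥(IndW ρ) →ₗ[ℂ] ↥(IndW ρ) where
  toFun f := ⟨fun x => f.1 (h⁻¹ * x), indW_shift_mem ρ h f.1 f.2⟩
  map_add' f g := Subtype.ext (funext fun x => rfl)
  map_smul' c f := Subtype.ext (funext fun x => rfl)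

lemma indL_mul (h₁ h₂ : H) : indL ρ (h₁ * h₂) = (indL ρ h₁).comp (indL ρ h₂) :=
  LinearMap.ext fun f => Subtype.ext (funext fun x => by
    show f.1 ((h₁ * h₂)⁻¹ * x) = f.1 (h₂⁻¹ * (h₁⁻¹ * x))
    rw [mul_inv_rev, mul_assoc])

lemma indL_one : indL ρ 1 = LinearMap.id :=
  LinearMap.ext fun f => Subtype.ext (funext fun x => by
    show f.1 ((1 : H)⁻¹ * x) = f.1 x
    rw [inv_one, one_mul])

def indRep : H →* (↥(IndW ρ) →ₗ[ℂ] ↥(IndW ρ))ˣ where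
  toFun h := ⟨indL ρ h, indL ρ h⁻¹,
    by rw [Module.End.mul_eq_comp, ← indL_mul, mul_inv_cancel, indL_one]; rfl,
    by rw [Module.End.mul_eq_comp, ← indL_mul, inv_mul_cancel, indL_one]; rfl⟩
  map_one' := Units.ext (indL_one ρ)
  map_mul' h₁ h₂ := Units.ext (by
    simp only [Units.val_mul]
    exact indL_mul ρ h₁ h₂)

lemma indRep_apply (h : H) (f : ↥(IndW ρ)) (x : H) :
    (((indRep ρ h : ↥(IndW ρ) →ₗ[ℂ] ↥(IndW ρ)) f : ↥(IndW ρ)) : H → V) x = f.1 (h⁻¹ * x) :=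
  rfl

lemma indRep_mul_apply (a b : H) (x : ↥(IndW ρ)) :
    (indRep ρ a : ↥(IndW ρ) →ₗ[ℂ] ↥(IndW ρ)) ((indRep ρ b : ↥(IndW ρ) →ₗ[ℂ] ↥(IndW ρ)) x)
      = (indRep ρ (a * b) : ↥(IndW ρ) →ₗ[ℂ] ↥(IndW ρ)) x := by
  rw [map_mul, Units.val_mul]
  rfl

end Ind

section Main
variable {H : Type*} [Group H] (K : Subgroup H) [K.Normal] {V : Type*} [AddCommGroup V]
  [Module ℂ V] (ρ : ↥K →* (V →ₗ[ℂ] V)ˣ)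

/-- membership fact for the canonical representative -/
lemma out_inv_mul_mem (h : H) : ((QuotientGroup.mk h : H ⧸ K)).out⁻¹ * h ∈ K := by
  rw [← QuotientGroup.eq]
  exact QuotientGroup.out_eq' _

/-- The family of conjugate representations indexed by cosets. -/
noncomputable def conjFam : (H ⧸ K) → (↥K →* (V →ₗ[ℂ] V)ˣ) := fun c => ρ.comp (conjHom K c.out)

/-- The evaluation equivalence `IndW ρ ≃ (H ⧸ K → V)`. -/
noncomputable def indEquiv : ↥(IndW ρ) ≃ₗ[ℂ] ((H ⧸ K) → V) where
  toFun f c := f.1 c.out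
  map_add' f g := rfl
  map_smul' c f := rfl
  invFun v := ⟨fun h => ((ρ ⟨(QuotientGroup.mk h : H ⧸ K).out⁻¹ * h, out_inv_mul_mem K h⟩)⁻¹ :
      (V →ₗ[ℂ] V)ˣ).1 (v (QuotientGroup.mk h)), by
    intro h y
    have hq : (QuotientGroup.mk (h * y) : H ⧸ K) = QuotientGroup.mk h :=
      QuotientGroup.mk_mul_of_mem h y.2
    have ha : (⟨(QuotientGroup.mk (h * y) : H ⧸ K).out⁻¹ * (h * y), out_inv_mul_mem K (h * y)⟩ : ↥K)
        = ⟨(QuotientGroup.mk h : H ⧸ K).out⁻¹ * h, out_inv_mul_mem K h⟩ * y := by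
      ext
      simp [hq, mul_assoc]
    dsimp only
    rw [ha, hq]
    simp only [map_mul, mul_inv_rev, Units.val_mul, Module.End.mul_apply]⟩
  left_inv f := Subtype.ext (funext fun h => by
    have := f.2 (QuotientGroup.mk h : H ⧸ K).out
      ⟨(QuotientGroup.mk h : H ⧸ K).out⁻¹ * h, out_inv_mul_mem K h⟩
    simp only at this
    show ((ρ _)⁻¹ : (V →ₗ[ℂ] V)ˣ).1 (f.1 _) = f.1 h
    rw [← this, mul_inv_cancel_left])
  right_inv v := funext fun c => by
    show ((ρ _)⁻¹ : (V →ₗ[ℂ] V)ˣ).1 (v (QuotientGroup.mk c.out)) = v c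
    have h1 : (⟨(QuotientGroup.mk c.out : H ⧸ K).out⁻¹ * c.out, out_inv_mul_mem K c.out⟩ : ↥K)
        = 1 := by
      ext
      show (QuotientGroup.mk c.out : H ⧸ K).out⁻¹ * c.out = 1
      rw [QuotientGroup.out_eq', inv_mul_cancel]
    rw [h1, QuotientGroup.out_eq', map_one, inv_one, Units.val_one, Module.End.one_apply]

lemma indEquiv_equivariant (y : ↥K) (f : ↥(IndW ρ)) :
    indEquiv K ρ (((indRep ρ).comp K.subtype y : ↥(IndW ρ) →ₗ[ℂ] ↥(IndW ρ)) f)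
      = (piRep (conjFam K ρ) y : ((H ⧸ K) → V) →ₗ[ℂ] ((H ⧸ K) → V)) (indEquiv K ρ f) := by
  funext c
  show f.1 ((y : H)⁻¹ * c.out) = ((conjFam K ρ c) y : V →ₗ[ℂ] V) (f.1 c.out)
  have hy : ((y : H)⁻¹ * c.out) = c.out * (((⟨c.out⁻¹ * y * c.out,
      by simpa using Subgroup.Normal.conj_mem ‹K.Normal› y.1 y.2 c.out⁻¹⟩ : ↥K)⁻¹ : ↥K) : H) := by
    push_cast
    group
  rw [hy, f.2 c.out _, map_inv, inv_inv]
  rfl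

end Main

/-- For `K` a normal subgroup of finite index in `H` and `ρ : K → GL(V)` an
irreducible representation on a nonzero finite-dimensional complex vector space, the
subspace `W` is invariant under the `H`-action `(h · f)(x) = f(h⁻¹ x)`, this action
defines a representation `ind(ρ)` of `H` on `W`, and this representation is
semisimple. -/
theorem statement14 {H : Type*} [Group H] (K : Subgroup H) [K.Normal] [K.FiniteIndex]
    {V : Type*} [AddCommGroup V] [Module ℂ V] [FiniteDimensional ℂ V]
    (ρ : ↥K →* (V →ₗ[ℂ] V)ˣ) (hirr : IsIrreducibleRep ρ) :
    (∀ (h : H), ∀ f ∈ IndW ρ, (fun x => f (h⁻¹ * x)) ∈ IndW ρ) ∧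
    ∃ ind : H →* (↥(IndW ρ) →ₗ[ℂ] ↥(IndW ρ))ˣ,
      (∀ (h : H) (f : ↥(IndW ρ)) (x : H),
        (((ind h : ↥(IndW ρ) →ₗ[ℂ] ↥(IndW ρ)) f : ↥(IndW ρ)) : H → V) x
          = (f : H → V) (h⁻¹ * x)) ∧
      IsSemisimpleRep ind := by
  refine ⟨fun h f hf => indW_shift_mem ρ h f hf, indRep ρ, fun h f x => rfl, ?_⟩
  -- Restriction of the induced representation to `K` is semisimple.
  have hKss : IsSemisimpleRep ((indRep ρ).comp K.subtype) := by
    apply transfer_semisimple _ (piRep (conjFam K ρ)) (indEquiv K ρ) (indEquiv_equivariant K ρ)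
    exact semisimpleRep_of _
      (piRep_semisimple (conjFam K ρ) (fun c => irr_conj K ρ hirr c.out))
  set π := indRep ρ with hπ
  intro U hU
  obtain ⟨C, hC0, hcompl⟩ := hKss U (fun y v hv => hU (y : H) v hv)
  have hC : ∀ (y : ↥K), ∀ v ∈ C, (π (y : H) : ↥(IndW ρ) →ₗ[ℂ] ↥(IndW ρ)) v ∈ C :=
    fun y v hv => hC0 y v hv
  -- the `K`-equivariant projection onto `U` along `C`
  set e : ↥(IndW ρ) →ₗ[ℂ] ↥(IndW ρ) := U.subtype.comp (U.linearProjOfIsCompl C hcompl) with he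
  have he_mem : ∀ x, e x ∈ U := fun x => ((U.linearProjOfIsCompl C hcompl) x).2
  have heU : ∀ u ∈ U, e u = u := by
    intro u hu
    have h2 : U.linearProjOfIsCompl C hcompl u = ⟨u, hu⟩ :=
      Submodule.linearProjOfIsCompl_apply_left hcompl ⟨u, hu⟩
    show ↑(U.linearProjOfIsCompl C hcompl u) = u
    rw [h2]
  have heC : ∀ c ∈ C, e c = 0 := by
    intro c hc
    have h2 : U.linearProjOfIsCompl C hcompl c = 0 :=
      Submodule.linearProjOfIsCompl_apply_right hcompl ⟨c, hc⟩
    show ↑(U.linearProjOfIsCompl C hcompl c) = (0 : ↥(IndW ρ))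
    rw [h2]
    rfl
  have heK : ∀ (y : ↥K) (x : ↥(IndW ρ)),
      e ((π (y : H) : ↥(IndW ρ) →ₗ[ℂ] ↥(IndW ρ)) x)
        = (π (y : H) : ↥(IndW ρ) →ₗ[ℂ] ↥(IndW ρ)) (e x) := by
    intro y x
    have hx : x ∈ U ⊔ C := by rw [hcompl.codisjoint.eq_top]; trivial
    obtain ⟨u, hu, c, hc, rfl⟩ := Submodule.mem_sup.mp hx
    calc e ((π (y : H) : ↥(IndW ρ) →ₗ[ℂ] ↥(IndW ρ)) (u + c))
        = e ((π (y : H) : ↥(IndW ρ) →ₗ[ℂ] ↥(IndW ρ)) u)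
          + e ((π (y : H) : ↥(IndW ρ) →ₗ[ℂ] ↥(IndW ρ)) c) := by rw [map_add, map_add]
      _ = (π (y : H) : ↥(IndW ρ) →ₗ[ℂ] ↥(IndW ρ)) u + 0 := by
          rw [heU _ (hU (y : H) u hu), heC _ (hC y c hc)]
      _ = (π (y : H) : ↥(IndW ρ) →ₗ[ℂ] ↥(IndW ρ)) (e (u + c)) := by
          rw [map_add e, heU u hu, heC c hc, add_zero, add_zero]
  haveI := Fintype.ofFinite (H ⧸ K)
  set q : ↥(IndW ρ) →ₗ[ℂ] ↥(IndW ρ) :=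
    (K.index : ℂ)⁻¹ • ∑ c : H ⧸ K,
      ((π c.out : ↥(IndW ρ) →ₗ[ℂ] ↥(IndW ρ)) ∘ₗ e ∘ₗ (π c.out⁻¹ : ↥(IndW ρ) →ₗ[ℂ] ↥(IndW ρ)))
    with hqdef
  have hn : (K.index : ℂ) ≠ 0 := Nat.cast_ne_zero.mpr Subgroup.FiniteIndex.index_ne_zero
  have hcard : (Fintype.card (H ⧸ K) : ℂ) = (K.index : ℂ) := by
    rw [K.index_eq_card, Nat.card_eq_fintype_card]
  have hq_apply : ∀ x, q x = (K.index : ℂ)⁻¹ • ∑ c : H ⧸ K,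
      (π c.out : ↥(IndW ρ) →ₗ[ℂ] ↥(IndW ρ))
        (e ((π c.out⁻¹ : ↥(IndW ρ) →ₗ[ℂ] ↥(IndW ρ)) x)) := by
    intro x
    rw [hqdef]
    simp [LinearMap.sum_apply]
  have hπmul : ∀ (a b : H) (x : ↥(IndW ρ)),
      (π a : ↥(IndW ρ) →ₗ[ℂ] ↥(IndW ρ)) ((π b : ↥(IndW ρ) →ₗ[ℂ] ↥(IndW ρ)) x)
        = (π (a * b) : ↥(IndW ρ) →ₗ[ℂ] ↥(IndW ρ)) x := fun a b x => indRep_mul_apply ρ a b x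
  have hq_mem : ∀ x, q x ∈ U := by
    intro x
    rw [hq_apply]
    exact U.smul_mem _ (Submodule.sum_mem U fun c _ => hU c.out _ (he_mem _))
  have hq_fix : ∀ u ∈ U, q u = u := by
    intro u hu
    rw [hq_apply]
    have hterm : ∀ c : H ⧸ K,
        (π c.out : ↥(IndW ρ) →ₗ[ℂ] ↥(IndW ρ))
          (e ((π c.out⁻¹ : ↥(IndW ρ) →ₗ[ℂ] ↥(IndW ρ)) u)) = u := by
      intro c
      rw [heU _ (hU c.out⁻¹ u hu), hπmul, mul_inv_cancel, map_one, Units.val_one,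
        Module.End.one_apply]
    rw [Finset.sum_congr rfl (fun c _ => hterm c), Finset.sum_const, Finset.card_univ,
      ← Nat.cast_smul_eq_nsmul ℂ, hcard, smul_smul, inv_mul_cancel₀ hn, one_smul]
  have hq_equiv : ∀ (h : H) (x : ↥(IndW ρ)),
      q ((π h : ↥(IndW ρ) →ₗ[ℂ] ↥(IndW ρ)) x) = (π h : ↥(IndW ρ) →ₗ[ℂ] ↥(IndW ρ)) (q x) := by
    intro h x
    rw [hq_apply, hq_apply, map_smul, map_sum]
    congr 1
    have key : ∀ c : H ⧸ K,
        (π c.out : ↥(IndW ρ) →ₗ[ℂ] ↥(IndW ρ))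
            (e ((π c.out⁻¹ : ↥(IndW ρ) →ₗ[ℂ] ↥(IndW ρ))
              ((π h : ↥(IndW ρ) →ₗ[ℂ] ↥(IndW ρ)) x)))
          = (π h : ↥(IndW ρ) →ₗ[ℂ] ↥(IndW ρ))
              ((π (h⁻¹ • c : H ⧸ K).out : ↥(IndW ρ) →ₗ[ℂ] ↥(IndW ρ))
                (e ((π (h⁻¹ • c : H ⧸ K).out⁻¹ : ↥(IndW ρ) →ₗ[ℂ] ↥(IndW ρ)) x))) := by
      intro c
      set d : H ⧸ K := h⁻¹ • c with hd
      have hdq : (QuotientGroup.mk (h⁻¹ * c.out) : H ⧸ K) = d := by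
        calc (QuotientGroup.mk (h⁻¹ * c.out) : H ⧸ K)
            = QuotientGroup.mk (h⁻¹ • c.out) := by rw [smul_eq_mul]
          _ = h⁻¹ • QuotientGroup.mk c.out := (MulAction.Quotient.smul_mk K h⁻¹ c.out).symm
          _ = h⁻¹ • c := by rw [QuotientGroup.out_eq']
          _ = d := hd.symm
      have hyK : d.out⁻¹ * (h⁻¹ * c.out) ∈ K := by
        rw [← QuotientGroup.eq, QuotientGroup.out_eq', hdq]
      set y : ↥K := ⟨d.out⁻¹ * (h⁻¹ * c.out), hyK⟩ with hy
      have hcout : c.out = h * d.out * (y : H) := by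
        rw [hy]
        group
      have h1 : c.out⁻¹ * h = ((y⁻¹ : ↥K) : H) * d.out⁻¹ := by
        rw [hcout]
        push_cast
        group
      rw [hπmul, h1, ← hπmul _ _ x, heK y⁻¹, hπmul, hcout]
      rw [show h * d.out * (y : H) * ((y⁻¹ : ↥K) : H) = h * d.out by push_cast; group]
      rw [← hπmul h d.out]
    exact Fintype.sum_equiv (MulAction.toPerm h⁻¹ : Equiv.Perm (H ⧸ K)) _ _ key
  refine ⟨LinearMap.ker q, ?_, ?_, ?_⟩
  · intro h v hv
    rw [LinearMap.mem_ker] at hv ⊢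
    rw [hq_equiv, hv, map_zero]
  · rw [Submodule.disjoint_def]
    intro x hxU hxK
    rw [LinearMap.mem_ker] at hxK
    rw [← hq_fix x hxU, hxK]
  · rw [codisjoint_iff, eq_top_iff]
    intro x _
    have h1 : x - q x ∈ LinearMap.ker q := by
      rw [LinearMap.mem_ker, map_sub, hq_fix _ (hq_mem x), sub_self]
    exact Submodule.mem_sup.mpr ⟨q x, hq_mem x, x - q x, h1, by abel⟩
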